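/- arXiv:1612.03667 — 2 statements merged into one kernel-verified Lean document; each statement's English description precedes it below -/
import Mathlib

section
/- The function F(x,y) = (1/4)(x² log x + y² log y − (x−y)² log(x−y)) satisfies the WDVV associativity condition for the metric g = 2 dx dy; explicitly, on the domain x,y,x−y > 0, the third-derivative tensors c_{αβγ} = ∂³F/∂z^α∂z^β∂z^γ define an associative multiplication via c_{αβ}^γ = g^{γε}c_{αβε}. -/
open Finset

/-- Partial derivative operators in the two coordinates `(x,y)`. -/
noncomputable def pd : Fin 2 → (ℝ → ℝ → ℝ) → (ℝ → ℝ → ℝ)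
  | 0, F => fun x y => deriv (fun t => F t y) x
  | 1, F => fun x y => deriv (fun t => F x t) y

/-- The prepotential `F = (1/4)(x² log x + y² log y − (x−y)² log(x−y))`. -/
noncomputable def Fstar : ℝ → ℝ → ℝ := fun x y =>
  (1 / 4) * (x ^ 2 * Real.log x + y ^ 2 * Real.log y
    - (x - y) ^ 2 * Real.log (x - y))

/-- Inverse of the metric `g = 2 dx dy`: `g^{12} = g^{21} = 1`, `g^{11} = g^{22} = 0`. -/
noncomputable def ginv : Fin 2 → Fin 2 → ℝ := fun a b => if a ≠ b then 1 else 0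

/-- Third derivative tensor `c_{αβγ} = ∂³F/∂z^α∂z^β∂z^γ`. -/
noncomputable def cLow (α β γ : Fin 2) : ℝ → ℝ → ℝ :=
  pd α (pd β (pd γ Fstar))

/-- Structure constants with an index raised via the metric, `c_{αβ}^γ = g^{γε} c_{αβε}`. -/
noncomputable def cUp (α β γ : Fin 2) : ℝ → ℝ → ℝ := fun x y =>
  ∑ ε, ginv γ ε * cLow α β ε x y


/-!
`Fstar = ¼ ∑ₖ ± f(⟨aₖ, z⟩)` with `f t = t² log t` and covectors `aₖ` giving `x`, `y`, `x - y`.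
Since `f''' t = 2 / t`, the third derivatives are `c_{αβγ} = ∑ₖ λₖ aₖα aₖβ aₖγ`, a totally
symmetric tensor. Raising an index with `g = 2 dx dy` just swaps `0 ↔ 1`, and in two dimensions
associativity of a symmetric tensor reduces to the single equation `c₀₀₀ c₁₁₁ = c₀₀₁ c₀₁₁`. With
`u = x - y` this is the identity `(1/x - 1/u)(1/y + 1/u) = -1/u²`.
-/

open Filter Topology Set Function

theorem pd_congr_of_eqOn {G H : ℝ → ℝ → ℝ} {U : Set (ℝ × ℝ)} (hU : IsOpen U)
    (h : EqOn (uncurry G) (uncurry H) U) (i : Fin 2) :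
    EqOn (uncurry (pd i G)) (uncurry (pd i H)) U := by
  rintro ⟨x, y⟩ hp
  have hU : U ∈ 𝓝 (x, y) := hU.mem_nhds hp
  match i with
  | 0 =>
    have hsl : (fun t => G t y) =ᶠ[𝓝 x] fun t => H t y :=
      Eventually.mono ((Continuous.prodMk_left y).continuousAt.preimage_mem_nhds hU)
        fun _ ht => h ht
    exact hsl.deriv_eq
  | 1 =>
    have hsl : (fun t => G x t) =ᶠ[𝓝 y] fun t => H x t :=
      Eventually.mono ((Continuous.prodMk_right x).continuousAt.preimage_mem_nhds hU)
        fun _ ht => h ht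
    exact hsl.deriv_eq

section Ridge

variable {ι : Type*} [Fintype ι] (a : ι → Fin 2 → ℝ)

def ridgeSum (w : ι → ℝ) (φ : ℝ → ℝ) (x y : ℝ) : ℝ :=
  ∑ k, w k * φ (a k 0 * x + a k 1 * y)

def ridgeCone : Set (ℝ × ℝ) :=
  {p | ∀ k, 0 < a k 0 * p.1 + a k 1 * p.2}

theorem isOpen_ridgeCone : IsOpen (ridgeCone a) := by
  simp only [ridgeCone, ofPred_forall]
  exact isOpen_iInter_of_finite fun k => isOpen_lt continuous_const (by fun_prop)

variable {a}

theorem pd_ridgeSum {w : ι → ℝ} {φ φ' : ℝ → ℝ} {x y : ℝ}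
    (hφ : ∀ k, HasDerivAt φ (φ' (a k 0 * x + a k 1 * y)) (a k 0 * x + a k 1 * y))
    (i : Fin 2) :
    pd i (ridgeSum a w φ) x y = ridgeSum a (fun k => w k * a k i) φ' x y := by
  match i with
  | 0 =>
    have h := HasDerivAt.fun_sum (u := univ) fun k _ =>
      ((hφ k).comp x (((hasDerivAt_id x).const_mul (a k 0)).add_const (a k 1 * y))).const_mul
        (w k)
    refine h.deriv.trans (sum_congr rfl fun k _ => ?_)
    ring
  | 1 =>
    have h := HasDerivAt.fun_sum (u := univ) fun k _ =>
      ((hφ k).comp y (((hasDerivAt_id y).const_mul (a k 1)).const_add (a k 0 * x))).const_mul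
        (w k)
    refine h.deriv.trans (sum_congr rfl fun k _ => ?_)
    ring

theorem eqOn_pd_ridgeSum {w : ι → ℝ} {φ φ' : ℝ → ℝ}
    (hφ : ∀ t, 0 < t → HasDerivAt φ (φ' t) t) (i : Fin 2) :
    EqOn (uncurry (pd i (ridgeSum a w φ))) (uncurry (ridgeSum a (fun k => w k * a k i) φ'))
      (ridgeCone a) :=
  fun _ hp => pd_ridgeSum (fun k => hφ _ (hp k)) i

theorem eqOn_pd_pd_pd_ridgeSum {w : ι → ℝ} {φ φ' φ'' φ''' : ℝ → ℝ}
    (hφ : ∀ t, 0 < t → HasDerivAt φ (φ' t) t) (hφ' : ∀ t, 0 < t → HasDerivAt φ' (φ'' t) t)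
    (hφ'' : ∀ t, 0 < t → HasDerivAt φ'' (φ''' t) t) (α β γ : Fin 2) :
    EqOn (uncurry (pd α (pd β (pd γ (ridgeSum a w φ)))))
      (uncurry (ridgeSum a (fun k => w k * a k γ * a k β * a k α) φ''')) (ridgeCone a) := by
  have hU := isOpen_ridgeCone a
  have h₂ := (pd_congr_of_eqOn hU (eqOn_pd_ridgeSum (w := w) hφ γ) β).trans
    (eqOn_pd_ridgeSum hφ' β)
  exact (pd_congr_of_eqOn hU h₂ α).trans (eqOn_pd_ridgeSum hφ'' α)

end Ridge

theorem sum_ginv_zero_mul (v : Fin 2 → ℝ) : ∑ ζ, ginv 0 ζ * v ζ = v 1 := by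
  simp [ginv, Fin.sum_univ_two]

theorem sum_ginv_one_mul (v : Fin 2 → ℝ) : ∑ ζ, ginv 1 ζ * v ζ = v 0 := by
  simp [ginv, Fin.sum_univ_two]

theorem assoc_of_symmetric_fin_two (c : Fin 2 → Fin 2 → Fin 2 → ℝ)
    (h₁₂ : ∀ α β γ, c α β γ = c β α γ) (h₂₃ : ∀ α β γ, c α β γ = c α γ β)
    (hwdvv : c 0 0 0 * c 1 1 1 = c 0 0 1 * c 0 1 1) (α β γ δ : Fin 2) :
    ∑ ε, (∑ ζ, ginv ε ζ * c α β ζ) * (∑ ζ, ginv δ ζ * c ε γ ζ)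
      = ∑ ε, (∑ ζ, ginv ε ζ * c α γ ζ) * (∑ ζ, ginv δ ζ * c ε β ζ) := by
  have h010 : c 0 1 0 = c 0 0 1 := h₂₃ 0 1 0
  have h100 : c 1 0 0 = c 0 0 1 := (h₁₂ 1 0 0).trans h010
  have h101 : c 1 0 1 = c 0 1 1 := h₁₂ 1 0 1
  have h110 : c 1 1 0 = c 0 1 1 := (h₂₃ 1 1 0).trans h101
  simp only [Fin.sum_univ_two (fun ε => (∑ ζ, ginv ε ζ * _) * _), sum_ginv_zero_mul,
    sum_ginv_one_mul]
  fin_cases α <;> fin_cases β <;> fin_cases γ <;> fin_cases δ <;>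
    simp only [Fin.zero_eta, Fin.mk_one, sum_ginv_zero_mul, sum_ginv_one_mul,
      h010, h100, h101, h110] <;>
    linarith

section SquareLog

open Real

variable {t : ℝ}

theorem hasDerivAt_sq_mul_log (ht : t ≠ 0) :
    HasDerivAt (fun s => s ^ 2 * log s) (2 * t * log t + t) t := by
  refine ((hasDerivAt_pow 2 t).mul (hasDerivAt_log ht)).congr_deriv ?_
  field_simp
  ring

theorem hasDerivAt_two_mul_mul_log_add (ht : t ≠ 0) :
    HasDerivAt (fun s => 2 * s * log s + s) (2 * log t + 3) t := by
  refine ((((hasDerivAt_id' t).const_mul 2).mul (hasDerivAt_log ht)).add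
    (hasDerivAt_id' t)).congr_deriv ?_
  field_simp
  ring

theorem hasDerivAt_two_mul_log_add (ht : t ≠ 0) :
    HasDerivAt (fun s => 2 * log s + 3) (2 / t) t :=
  (((hasDerivAt_log ht).const_mul 2).add_const 3).congr_deriv (div_eq_mul_inv _ _).symm

end SquareLog

def fstarCovector : Fin 3 → Fin 2 → ℝ := ![![1, 0], ![0, 1], ![1, -1]]

noncomputable def fstarWeight : Fin 3 → ℝ := ![1 / 4, 1 / 4, -1 / 4]

theorem Fstar_eq_ridgeSum :
    Fstar = ridgeSum fstarCovector fstarWeight (fun t => t ^ 2 * Real.log t) := by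
  ext x y
  simp only [Fstar, ridgeSum, Fin.sum_univ_three, fstarCovector, fstarWeight, Matrix.cons_val,
    one_mul, zero_mul, add_zero, zero_add, neg_one_mul, ← sub_eq_add_neg]
  ring

theorem mem_ridgeCone_fstarCovector {x y : ℝ} (hy : 0 < y) (hxy : 0 < x - y) :
    (x, y) ∈ ridgeCone fstarCovector := by
  intro k
  fin_cases k <;> simp [fstarCovector] <;> linarith

section FstarTensor

variable {x y : ℝ} (hy : 0 < y) (hxy : 0 < x - y)
include hy hxy

theorem cLow_eq_ridgeSum (α β γ : Fin 2) :
    cLow α β γ x y = ridgeSum fstarCovector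
      (fun k => fstarWeight k * fstarCovector k γ * fstarCovector k β * fstarCovector k α)
      (fun t => 2 / t) x y := by
  rw [cLow, Fstar_eq_ridgeSum]
  exact eqOn_pd_pd_pd_ridgeSum (fun t ht => hasDerivAt_sq_mul_log ht.ne')
    (fun t ht => hasDerivAt_two_mul_mul_log_add ht.ne')
    (fun t ht => hasDerivAt_two_mul_log_add ht.ne') α β γ
    (mem_ridgeCone_fstarCovector hy hxy)

theorem cLow_comm₁₂ (α β γ : Fin 2) : cLow α β γ x y = cLow β α γ x y := by
  simp only [cLow_eq_ridgeSum hy hxy, ridgeSum]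
  exact sum_congr rfl fun _ _ => by ring

theorem cLow_comm₂₃ (α β γ : Fin 2) : cLow α β γ x y = cLow α γ β x y := by
  simp only [cLow_eq_ridgeSum hy hxy, ridgeSum]
  exact sum_congr rfl fun _ _ => by ring

theorem cLow_wdvv :
    cLow 0 0 0 x y * cLow 1 1 1 x y = cLow 0 0 1 x y * cLow 0 1 1 x y := by
  have hx₀ : x ≠ 0 := (by linarith : 0 < x).ne'
  have hy₀ := hy.ne'
  have hxy₀ := hxy.ne'
  simp only [cLow_eq_ridgeSum hy hxy, ridgeSum, Fin.sum_univ_three, fstarCovector, fstarWeight,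
    Matrix.cons_val, one_mul, zero_mul, add_zero, zero_add, neg_one_mul, ← sub_eq_add_neg]
  field_simp
  ring

end FstarTensor

theorem WDVV_A1_example_general (x y : ℝ) (hy : 0 < y) (hxy : 0 < x - y)
    (α β γ δ : Fin 2) :
    ∑ ε, cUp α β ε x y * cUp ε γ δ x y
      = ∑ ε, cUp α γ ε x y * cUp ε β δ x y :=
  assoc_of_symmetric_fin_two (fun α β γ => cLow α β γ x y) (cLow_comm₁₂ hy hxy)
    (cLow_comm₂₃ hy hxy) (cLow_wdvv hy hxy) α β γ δ

/-- `F = (1/4)(x² log x + y² log y − (x−y)² log(x−y))` satisfies the WDVV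
associativity condition for the metric `g = 2 dx dy` on `x, y, x − y > 0`:
the multiplication defined by `c_{αβ}^γ = g^{γε}c_{αβε}` is associative. -/
theorem WDVV_A1_example (x y : ℝ) (hx : 0 < x) (hy : 0 < y) (hxy : 0 < x - y)
    (α β γ δ : Fin 2) :
    ∑ ε, cUp α β ε x y * cUp ε γ δ x y
      = ∑ ε, cUp α γ ε x y * cUp ε β δ x y :=
  WDVV_A1_example_general x y hy hxy α β γ δ
end

section
/- Let U be a finite spanning set of covectors on a vector space V with multiplicities h_α such that Σ_{α∈U} h_α α(x)α(y) = h_U (x,y), and let θ_s be an invariant small orbit with Σ_{w∈θ_s} h_w w(z)² = h_s (z,z) and Σ_{w∈θ_s} h_w w(z) = 0 for all z ∈ V. Extend V to V^ext = V ⊕ span(n^∨) with n^∨ orthogonal to V, and set U^ext = U ∪ {±(w+n) : w ∈ θ_s} ∪ {±n}. Then Σ_{α∈U^ext} h_α α(x)α(y) = (h_U + 2h_s)(x,y)^ext for all x,y ∈ V^ext if and only if h_U + 2h_s = 2(h_n + Σ_{w∈θ_s} h_w)(n^∨, n^∨). -/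
open Finset

/-- Lemma (metric lemma for extended configurations).  Let `U` (indexed by `ι`) be a
finite spanning configuration of covectors `α` with multiplicities `h` on `V`, with
canonical metric `∑ h_α α(x)α(y) = h_U (x,y)`, and let `θ_s` (indexed by `κ`) be an
invariant small orbit: `∑ h_w w(z)² = h_s (z,z)` and `∑ h_w w(z) = 0`.  Extend `V` to
`V × ℝ` with `n^∨ = (0,1)` orthogonal to `V` and `(n^∨,n^∨) = N ≠ 0`, the covector `n`
being the metric dual of `n^∨` (so `n(v,t) = N·t`), and each `w ∈ θ_s` extended by zero.
Then the canonical metric of `U^ext = U ∪ {±(w+n)} ∪ {±n}` agrees with the orthogonal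
extension of the metric, with total constant `h_U + 2h_s`, if and only if
`h_U + 2h_s = 2(h_n + ∑ h_w) N`. -/
theorem extended_metric_lemma
    {V : Type*} [AddCommGroup V] [Module ℝ V] [FiniteDimensional ℝ V]
    (B : V →ₗ[ℝ] V →ₗ[ℝ] ℝ) (hBsymm : ∀ x y, B x y = B y x)
    {ι κ : Type*} (U : Finset ι) (α : ι → (V →ₗ[ℝ] ℝ)) (h : ι → ℝ)
    (hspan : Submodule.span ℝ (Set.range fun i : U => α i) = ⊤)
    (hU : ℝ) (hcanon : ∀ x y : V, ∑ i ∈ U, h i * α i x * α i y = hU * B x y)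
    (θ : Finset κ) (w : κ → (V →ₗ[ℝ] ℝ)) (hw : κ → ℝ) (hn : ℝ)
    (hs : ℝ)
    (hinv1 : ∀ z : V, ∑ k ∈ θ, hw k * (w k z) ^ 2 = hs * B z z)
    (hinv2 : ∀ z : V, ∑ k ∈ θ, hw k * w k z = 0)
    (N : ℝ) (hN : N ≠ 0) :
    (∀ x y : V × ℝ,
        (∑ i ∈ U, h i * α i x.1 * α i y.1)
          + (∑ k ∈ θ, 2 * hw k * (w k x.1 + N * x.2) * (w k y.1 + N * y.2))
          + 2 * hn * (N * x.2) * (N * y.2)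
        = (hU + 2 * hs) * (B x.1 y.1 + N * x.2 * y.2))
      ↔ hU + 2 * hs = 2 * (hn + ∑ k ∈ θ, hw k) * N := by
  have hpol : ∀ x y : V, ∑ k ∈ θ, hw k * w k x * w k y = hs * B x y := by
    intro x y
    have h1 := hinv1 (x + y)
    have h2 := hinv1 x
    have h3 := hinv1 y
    simp only [map_add] at h1
    have e : ∑ k ∈ θ, hw k * (w k x + w k y) ^ 2
        = ∑ k ∈ θ, hw k * (w k x) ^ 2 + 2 * ∑ k ∈ θ, hw k * w k x * w k y
          + ∑ k ∈ θ, hw k * (w k y) ^ 2 := by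
      rw [Finset.mul_sum, ← Finset.sum_add_distrib, ← Finset.sum_add_distrib]
      exact Finset.sum_congr rfl fun k _ => by ring
    rw [e, h2, h3] at h1
    simp only [LinearMap.add_apply] at h1
    rw [hBsymm y x] at h1
    linarith
  constructor
  · intro H
    have key := H (0, 1) (0, 1)
    simp only [map_zero, zero_add, mul_one] at key
    have e1 : ∑ i ∈ U, h i * α i (0 : V) * α i (0 : V) = 0 := by
      simp
    have e2 : ∑ k ∈ θ, 2 * hw k * (w k (0 : V) + N * 1) * (w k (0 : V) + N * 1)
        = 2 * N ^ 2 * ∑ k ∈ θ, hw k := by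
      rw [Finset.mul_sum]
      exact Finset.sum_congr rfl fun k _ => by simp; ring
    have key2 := H (0, 1) (0, 1)
    rw [e1, e2] at key2
    simp only [map_zero, mul_one] at key2
    refine mul_right_cancel₀ hN ?_
    linear_combination -key2
  · intro H x y
    have e2 : ∑ k ∈ θ, 2 * hw k * (w k x.1 + N * x.2) * (w k y.1 + N * y.2)
        = 2 * (∑ k ∈ θ, hw k * w k x.1 * w k y.1)
          + 2 * N * y.2 * (∑ k ∈ θ, hw k * w k x.1)
          + 2 * N * x.2 * (∑ k ∈ θ, hw k * w k y.1)
          + 2 * N ^ 2 * x.2 * y.2 * (∑ k ∈ θ, hw k) := by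
      rw [Finset.mul_sum, Finset.mul_sum, Finset.mul_sum, Finset.mul_sum,
        ← Finset.sum_add_distrib, ← Finset.sum_add_distrib, ← Finset.sum_add_distrib]
      exact Finset.sum_congr rfl fun k _ => by ring
    rw [hcanon, e2, hpol, hinv2, hinv2]
    linear_combination (-N * x.2 * y.2) * H
end
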